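/- Let L be an ijk-list of quaternions over the integers whose product equals i, and let L' be any permutation (rearrangement) of L. Then the product of L' equals i or -i; in particular the product of L' is not equal to j and not equal to k. (This is the paper's Lemma 1 in its quaternion representation: a validly typed ABC expression cannot be rearranged into a validly typed expression of a different type.) -/

import Mathlib

open Quaternion

/-- The quaternion unit `i` over the integers. -/
def qi : ℍ[ℤ] := ⟨0, 1, 0, 0⟩

/-- The quaternion unit `j` over the integers. -/
def qj : ℍ[ℤ] := ⟨0, 0, 1, 0⟩

/-- The quaternion unit `k` over the integers. -/
def qk : ℍ[ℤ] := ⟨0, 0, 0, 1⟩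

/-- A list of quaternions is an ijk-list if each element is `i`, `j` or `k`. -/
def IsIJKList (L : List ℍ[ℤ]) : Prop := ∀ x ∈ L, x = qi ∨ x = qj ∨ x = qk

/-! Rearranging a product of factors that pairwise commute or anticommute can only change its
sign. The units `i`, `j`, `k` are such factors, and neither `j` nor `k` is `± i`. -/

def CommuteUpToSign {M : Type*} [Mul M] [Neg M] (a b : M) : Prop :=
  a * b = b * a ∨ a * b = -(b * a)

theorem List.Perm.prod_eq_or_eq_neg {M : Type*} [Monoid M] [HasDistribNeg M] {l₁ l₂ : List M}
    (hp : l₁.Perm l₂) (hcomm : ∀ a ∈ l₂, ∀ b ∈ l₂, CommuteUpToSign a b) :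
    l₁.prod = l₂.prod ∨ l₁.prod = -l₂.prod := by
  induction hp with
  | nil => exact Or.inl rfl
  | cons x _ ih =>
    rcases ih fun a ha b hb => hcomm a (.tail x ha) b (.tail x hb) with e | e <;> simp [e]
  | swap x y l =>
    simp only [List.prod_cons, ← mul_assoc]
    rcases hcomm y (by simp) x (by simp) with e | e <;> simp [e]
  | @trans _ l₂ _ _ p₂₃ ih₁₂ ih₂₃ =>
    have hcomm₂ : ∀ a ∈ l₂, ∀ b ∈ l₂, CommuteUpToSign a b := fun a ha b hb =>
      hcomm a (p₂₃.mem_iff.mp ha) b (p₂₃.mem_iff.mp hb)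
    rcases ih₁₂ hcomm₂ with e₁ | e₁ <;> rcases ih₂₃ hcomm with e₂ | e₂ <;> simp [e₁, e₂]

theorem commuteUpToSign_of_isIJK {a b : ℍ[ℤ]} (ha : a = qi ∨ a = qj ∨ a = qk)
    (hb : b = qi ∨ b = qj ∨ b = qk) : CommuteUpToSign a b := by
  rcases ha with rfl | rfl | rfl <;> rcases hb with rfl | rfl | rfl <;>
    simp only [CommuteUpToSign, Quaternion.ext_iff] <;> decide

theorem perm_of_prod_i (L L' : List ℍ[ℤ]) (hL : IsIJKList L)
    (hprod : L.prod = qi) (hperm : L'.Perm L) :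
    (L'.prod = qi ∨ L'.prod = -qi) ∧ L'.prod ≠ qj ∧ L'.prod ≠ qk := by
  have hsign := hperm.prod_eq_or_eq_neg fun a ha b hb =>
    commuteUpToSign_of_isIJK (hL a ha) (hL b hb)
  rw [hprod] at hsign
  refine ⟨hsign, ?_, ?_⟩ <;> rcases hsign with h | h <;>
    rw [h, Ne, Quaternion.ext_iff] <;> decide
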